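/- In the refined program P', every reachable labeled location ⟨ℓ, τ⟩ is only reached with states σ satisfying τ: if a path from the initial configuration (⟨ℓ_0, true⟩, σ_0) has positive probability and ends in configuration (⟨ℓ, τ⟩, σ), then σ ⊨ τ. -/
import Mathlib


/-- In the refined program, every reachable labeled location `⟨ℓ, τ⟩` is only reached
with states satisfying `τ`: any configuration reachable from the initial configuration
`(⟨ℓ₀, true⟩, σ₀)` satisfies the label of its location. Steps fire only when the label
and the guard hold, and target labels collect those abstraction-layer constraints
implied by label, guard, and update. -/
theorem stmt7 {L S T : Type*}
    (α : L → Set ((S → Prop)))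
    (src tgt : T → L) (guard : T → S → Prop) (upd : T → S → S)
    (Step : ((L × (S → Prop)) × S) → ((L × (S → Prop)) × S) → Prop)
    (hStep : ∀ (ℓ : L) (τ : S → Prop) (σ : S) (ℓ' : L) (τ' : S → Prop) (σ' : S),
      Step ((ℓ, τ), σ) ((ℓ', τ'), σ') →
      ∃ t : T, src t = ℓ ∧ tgt t = ℓ' ∧ τ σ ∧ guard t σ ∧ σ' = upd t σ ∧
        τ' = fun s => ∀ ψ ∈ α ℓ', (∀ σ₁ : S, τ σ₁ → guard t σ₁ → ψ (upd t σ₁)) → ψ s)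
    (ℓ₀ : L) (σ₀ : S) :
    ∀ (ℓ : L) (τ : S → Prop) (σ : S),
      Relation.ReflTransGen Step ((ℓ₀, fun _ => True), σ₀) ((ℓ, τ), σ) → τ σ := by
  suffices h : ∀ c, Relation.ReflTransGen Step ((ℓ₀, fun _ => True), σ₀) c → c.1.2 c.2 by
    intro ℓ τ σ hr; exact h _ hr
  intro c hr
  induction hr with
  | refl => trivial
  | tail hab hbc ih =>
    rename_i b c
    obtain ⟨⟨ℓ, τ⟩, σ⟩ := b
    obtain ⟨⟨ℓ', τ'⟩, σ'⟩ := c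
    obtain ⟨t, -, -, hτσ, hg, hσ', hτ'⟩ := hStep ℓ τ σ ℓ' τ' σ' hbc
    subst hσ' hτ'
    intro ψ _ himp
    exact himp σ ih hg
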